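/- arXiv:1206.5775 — 2 statements merged into one kernel-verified Lean document; each statement's English description precedes it below -/
import Mathlib

section
/- Let X be a Baire topological vector space, f, g : X → ℝ quasiconvex with {x : f(x) ≠ g(x)} meagre, and m := T-ess inf_X f > −∞. Suppose x is a point of continuity of g. Then x is a point of continuity of f unless g(x) = m, f(x) ≤ m, and x lies in the closure of {y : f(y) < α} for some α < m. Conversely, if g(x) = m, f(x) ≤ m and x ∈ ⋃_{α<m} closure({f < α}), then f is discontinuous at x. -/
open Set Topology

section aux
variable {X : Type*} [TopologicalSpace X]

lemma meagre_preimage_homeo {Y : Type*} [TopologicalSpace Y] (e : X ≃ₜ Y) {s : Set Y}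
    (hs : IsMeagre s) : IsMeagre (e ⁻¹' s) := by
  rw [isMeagre_iff_countable_union_isNowhereDense] at hs ⊢
  obtain ⟨S, hS1, hS2, hS3⟩ := hs
  refine ⟨(fun t => e ⁻¹' t) '' S, ?_, hS2.image _, ?_⟩
  · rintro t ⟨u, hu, rfl⟩
    have := hS1 u hu
    unfold IsNowhereDense at this ⊢
    rw [← e.preimage_closure, ← e.preimage_interior, this, preimage_empty]
  · intro z hz
    obtain ⟨u, hu, hzu⟩ := hS3 hz
    exact ⟨e ⁻¹' u, mem_image_of_mem _ hu, hzu⟩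

lemma meagre_union' {s t : Set X} (hs : IsMeagre s) (ht : IsMeagre t) : IsMeagre (s ∪ t) := by
  rw [IsMeagre, compl_union]
  exact Filter.inter_mem hs ht

lemma not_isMeagre_of_mem_nhds [BaireSpace X] {s : Set X} {x : X} (hs : s ∈ nhds x) :
    ¬ IsMeagre s := by
  intro hm
  obtain ⟨U, hUs, hU, hxU⟩ := mem_nhds_iff.1 hs
  have hUm : IsMeagre U := hm.mono hUs
  have : Dense Uᶜ := dense_of_mem_residual hUm
  obtain ⟨y, hy1, hy2⟩ := (this.inter_open_nonempty U hU ⟨x, hxU⟩)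
  exact hy2 hy1
end aux

section aux2
variable {X : Type*} [AddCommGroup X] [Module ℝ X] [TopologicalSpace X]
    [IsTopologicalAddGroup X] [ContinuousSMul ℝ X]

/-- homothety z ↦ x' + t • (z - x') as a homeomorphism -/
noncomputable def homothety (x' : X) (t : ℝ) (ht : t ≠ 0) : X ≃ₜ X :=
  ((Homeomorph.addLeft (-x')).trans (Homeomorph.smulOfNeZero t ht)).trans
    (Homeomorph.addLeft x')

lemma homothety_apply (x' : X) (t : ℝ) (ht : t ≠ 0) (z : X) :
    homothety x' t ht z = x' + t • (-x' + z) := rfl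

/-- L2: a convex set comeagre in an open set contains that open set. -/
lemma convex_subset_of_comeagre [BaireSpace X] {C U : Set X} (hC : Convex ℝ C)
    (hU : IsOpen U) (hm : IsMeagre (U \ C)) : U ⊆ C := by
  intro u hu
  set W : Set X := ((u + ·) ⁻¹' U) ∩ ((u - ·) ⁻¹' U) with hW
  have hWo : IsOpen W := ((hU.preimage (continuous_add_left u))).inter
    (hU.preimage (continuous_const.sub continuous_id))
  have hW0 : (0 : X) ∈ W := by simp [hW, hu]
  have h1 : IsMeagre ((u + ·) ⁻¹' (U \ C) : Set X) :=
    meagre_preimage_homeo (Homeomorph.addLeft u) hm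
  have h2 : IsMeagre ((u - ·) ⁻¹' (U \ C) : Set X) := by
    have : (u - ·) = (fun z : X => u + z) ∘ (fun z : X => -z) := by funext z; simp [sub_eq_add_neg]
    rw [this, preimage_comp]
    exact meagre_preimage_homeo (Homeomorph.neg X) h1
  have hWnm : ¬ IsMeagre W := not_isMeagre_of_mem_nhds (hWo.mem_nhds hW0)
  have : ¬ (W ⊆ ((u + ·) ⁻¹' (U \ C)) ∪ ((u - ·) ⁻¹' (U \ C))) := by
    intro hsub
    exact hWnm ((meagre_union' h1 h2).mono hsub)
  obtain ⟨z, hzW, hz⟩ := not_subset.1 this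
  simp only [mem_union, mem_preimage, mem_diff, not_or, not_and, not_not] at hz
  have hz1 : u + z ∈ C := hz.1 hzW.1
  have hz2 : u - z ∈ C := hz.2 hzW.2
  have := hC hz1 hz2 (by norm_num : (0:ℝ) ≤ 1/2) (by norm_num : (0:ℝ) ≤ 1/2) (by norm_num)
  convert this using 1
  module

/-- L3 -/
lemma not_isMeagre_inter_of_convex [BaireSpace X] {C V : Set X} {x' : X} (hC : Convex ℝ C)
    (hCnm : ¬ IsMeagre C) (hx' : x' ∈ C) (hV : V ∈ nhds x') (hm : IsMeagre (C ∩ V)) : False := by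
  set W : Set X := (x' + ·) ⁻¹' V with hWdef
  have hW : W ∈ nhds (0 : X) := by
    have : Continuous (x' + · : X → X) := continuous_add_left x'
    have := this.continuousAt (x := (0:X))
    apply this.preimage_mem_nhds; simpa using hV
  set A : ℕ → Set X := fun n => {z ∈ C | (1 / (n + 1) : ℝ) • (z - x') ∈ W} with hA
  have hcov : C ⊆ ⋃ n, A n := by
    intro z hz
    have hten : Filter.Tendsto (fun t : ℝ => t • (z - x')) (nhds 0) (nhds 0) := by
      have : Continuous (fun t : ℝ => t • (z - x')) := continuous_id.smul continuous_const
      simpa [ContinuousAt] using this.continuousAt (x := (0:ℝ))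
    have hseq : Filter.Tendsto (fun n : ℕ => (1 / (n + 1) : ℝ)) Filter.atTop (nhds 0) := by
      simpa using tendsto_one_div_add_atTop_nhds_zero_nat (𝕜 := ℝ)
    have := (hten.comp hseq).eventually_mem hW
    obtain ⟨n, hn⟩ := this.exists
    exact mem_iUnion.2 ⟨n, hz, hn⟩
  have : ∃ n, ¬ IsMeagre (A n) := by
    by_contra h
    push_neg at h
    exact hCnm ((isMeagre_iUnion h).mono hcov)
  obtain ⟨n, hn⟩ := this
  apply hn
  have htne : (1 / (n + 1) : ℝ) ≠ 0 := by positivity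
  refine (meagre_preimage_homeo (homothety x' (1/(n+1)) htne) hm).mono ?_
  intro z hz
  obtain ⟨hzC, hzW⟩ := hz
  have key : homothety x' (1/(n+1)) htne z = x' + (1/(n+1) : ℝ) • (z - x') := by
    rw [homothety_apply, neg_add_eq_sub]
  rw [mem_preimage, key]
  constructor
  · have h01 : (0:ℝ) ≤ 1/(n+1) := by positivity
    have h11 : (1/(n+1):ℝ) ≤ 1 := by
      rw [div_le_one (by positivity)]; norm_num
    have := hC hx' hzC (by linarith : (0:ℝ) ≤ 1 - 1/(n+1)) h01 (by ring)
    convert this using 1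
    module
  · exact hzW
end aux2

/-- Topological essential infimum of `f` on `U`. -/
noncomputable def tessInf {X : Type*} [TopologicalSpace X] (f : X → ℝ) (U : Set X) : EReal :=
  sSup ((fun α : ℝ => (α : EReal)) '' {α : ℝ | IsMeagre {x ∈ U | f x < α}})

section main
variable {X : Type*} [AddCommGroup X] [Module ℝ X] [TopologicalSpace X]
    [IsTopologicalAddGroup X] [ContinuousSMul ℝ X] [BaireSpace X]
variable {f g : X → ℝ} {m : EReal} {x : X}

lemma mem_S_of_lt (hm : m = tessInf f Set.univ) {α : ℝ} (h : (α : EReal) < m) :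
    ∃ β : ℝ, α < β ∧ IsMeagre {y | f y < β} := by
  rw [hm] at h
  unfold tessInf at h
  obtain ⟨b, hb, hab⟩ := lt_sSup_iff.1 h
  obtain ⟨β, hβ, rfl⟩ := hb
  refine ⟨β, by exact_mod_cast (show (α:EReal) < (β:EReal) from hab), ?_⟩
  simpa [Set.sep_univ] using hβ

lemma meagre_of_lt (hm : m = tessInf f Set.univ) {α : ℝ} (h : (α : EReal) < m) :
    IsMeagre {y | f y < α} := by
  obtain ⟨β, hαβ, hβ⟩ := mem_S_of_lt hm h
  exact hβ.mono (fun y hy => lt_trans hy hαβ)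

lemma le_tessInf_of_meagre (hm : m = tessInf f Set.univ) {α : ℝ}
    (h : IsMeagre {y | f y < α}) : (α : EReal) ≤ m := by
  rw [hm]
  exact le_sSup ⟨α, by simpa [Set.sep_univ] using h, rfl⟩

lemma not_meagre_of_tessInf_lt (hm : m = tessInf f Set.univ) {β : ℝ}
    (h : m < (β : EReal)) : ¬ IsMeagre {y | f y < β} :=
  fun hme => absurd (le_tessInf_of_meagre hm hme) (not_le.2 h)

/-- Upper bound: sublevel sets above g x are neighbourhoods of x. -/
lemma sublevel_mem_nhds (hf : ∀ α : ℝ, Convex ℝ {x | f x < α})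
    (hfg : IsMeagre {x | f x ≠ g x}) (hx : ContinuousAt g x) {c : ℝ} (hc : g x < c) :
    {y | f y < c} ∈ nhds x := by
  have hgc : {y | g y < c} ∈ nhds x := hx.preimage_mem_nhds (Iio_mem_nhds hc)
  obtain ⟨U, hUsub, hU, hxU⟩ := mem_nhds_iff.1 hgc
  have hmg : IsMeagre (U \ {y | f y < c}) := by
    refine hfg.mono (fun y hy => ?_)
    intro heq
    exact hy.2 (by rw [Set.mem_setOf_eq, heq]; exact hUsub hy.1)
  exact mem_nhds_iff.2 ⟨U, convex_subset_of_comeagre (hf c) hU hmg, hU, hxU⟩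

lemma fx_le_gx (hf : ∀ α : ℝ, Convex ℝ {x | f x < α})
    (hfg : IsMeagre {x | f x ≠ g x}) (hx : ContinuousAt g x) : f x ≤ g x := by
  by_contra h
  push_neg at h
  have := mem_of_mem_nhds (sublevel_mem_nhds hf hfg hx
    (show g x < (g x + f x)/2 by linarith))
  simp only [Set.mem_setOf_eq] at this
  linarith

lemma tessInf_le_gx (hm : m = tessInf f Set.univ)
    (hfg : IsMeagre {x | f x ≠ g x}) (hx : ContinuousAt g x) : m ≤ (g x : EReal) := by
  by_contra h
  push_neg at h
  obtain ⟨β, hgβ, hβ⟩ := mem_S_of_lt hm h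
  have hgnb : {y | g y < β} ∈ nhds x := hx.preimage_mem_nhds (Iio_mem_nhds hgβ)
  refine not_isMeagre_of_mem_nhds hgnb ((meagre_union' hβ hfg).mono ?_)
  intro y hy
  by_cases heq : f y = g y
  · exact Or.inl (by rw [Set.mem_setOf_eq, heq]; exact hy)
  · exact Or.inr heq

/-- Case m < g x : x is not in the closure of any strict sublevel below g x. -/
lemma not_mem_closure_of_lt (hm : m = tessInf f Set.univ) (hbot : ⊥ < m)
    (hf : ∀ α : ℝ, Convex ℝ {x | f x < α})
    (hfg : IsMeagre {x | f x ≠ g x}) (hx : ContinuousAt g x)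
    (hmg : m < (g x : EReal)) {γ : ℝ} (hγ : γ < g x) :
    x ∉ closure {y | f y < γ} := by
  obtain ⟨b, hb1, hb2⟩ := exists_between hmg
  have hbne_top : b ≠ ⊤ := ne_top_of_lt hb2
  have hbne_bot : b ≠ ⊥ := ne_bot_of_gt (hbot.trans hb1)
  set β₀ : ℝ := b.toReal with hβ₀
  have hβ₀b : (β₀ : EReal) = b := EReal.coe_toReal hbne_top hbne_bot
  set β : ℝ := max β₀ ((γ + g x)/2) with hβdef
  have hβm : m < (β : EReal) := by
    calc m < b := hb1
    _ = (β₀ : EReal) := hβ₀b.symm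
    _ ≤ (β : EReal) := by exact_mod_cast le_max_left _ _
  have hβgx : β < g x := by
    apply max_lt
    · exact_mod_cast hβ₀b ▸ hb2
    · linarith
  have hγβ : γ < β := lt_of_lt_of_le (by linarith : γ < (γ + g x)/2) (le_max_right _ _)
  set C : Set X := {y | f y < β} with hC
  have hCnm : ¬ IsMeagre C := not_meagre_of_tessInf_lt hm hβm
  set β' : ℝ := (β + g x)/2 with hβ'
  have hVnb : {y | β' < g y} ∈ nhds x := hx.preimage_mem_nhds (Ioi_mem_nhds (by
    simp only [hβ']; linarith))
  obtain ⟨U, hUsub, hU, hxU⟩ := mem_nhds_iff.1 hVnb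
  intro hxcl
  have hxclC : x ∈ closure C := closure_mono (fun y hy => lt_trans hy hγβ) hxcl
  obtain ⟨x', hx'U, hx'C⟩ := mem_closure_iff_nhds.1 hxclC U (hU.mem_nhds hxU)
  have hCU : IsMeagre (C ∩ U) := by
    refine hfg.mono (fun y hy => ?_)
    intro heq
    have h1 : f y < β := hy.1
    have h2 : β' < g y := hUsub hy.2
    rw [heq] at h1
    simp only [hβ'] at h2
    linarith
  exact not_isMeagre_inter_of_convex (hf β) hCnm hx'C (hU.mem_nhds hx'U) hCU

lemma continuousAt_of_no_closure (hf : ∀ α : ℝ, Convex ℝ {x | f x < α})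
    (hfg : IsMeagre {x | f x ≠ g x}) (hx : ContinuousAt g x)
    (hno : ∀ γ : ℝ, γ < g x → x ∉ closure {y | f y < γ}) :
    ContinuousAt f x := by
  have hle : f x ≤ g x := fx_le_gx hf hfg hx
  have hge : g x ≤ f x := by
    by_contra h
    push_neg at h
    have hγ : (f x + g x)/2 < g x := by linarith
    have := hno _ hγ
    exact this (subset_closure (by simp only [Set.mem_setOf_eq]; linarith))
  have hfx : f x = g x := le_antisymm hle hge
  rw [ContinuousAt]
  rw [tendsto_order]
  constructor
  · intro a ha
    rw [hfx] at ha
    have hno' := hno ((a + g x)/2) (by linarith)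
    have hopen : IsOpen (closure {y | f y < (a + g x)/2})ᶜ := isClosed_closure.isOpen_compl
    refine Filter.eventually_of_mem (hopen.mem_nhds hno') (fun y hy => ?_)
    have : ¬ (f y < (a + g x)/2) := fun hlt => hy (subset_closure hlt)
    push_neg at this
    linarith
  · intro b hb
    rw [hfx] at hb
    exact Filter.eventually_of_mem (sublevel_mem_nhds hf hfg hx hb) (fun y hy => hy)

lemma not_continuousAt_of_closure (hm : m = tessInf f Set.univ)
    {α : ℝ} (hα : (α : EReal) < m) (hcl : x ∈ closure {y | f y < α}) :
    ¬ ContinuousAt f x := by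
  intro hc
  have hfxle : f x ≤ α := by
    by_contra h
    push_neg at h
    have := (tendsto_order.1 hc).1 α h
    obtain ⟨y, hy1, hy2⟩ := mem_closure_iff_nhds.1 hcl _ this
    simp only [Set.mem_setOf_eq] at hy1 hy2
    linarith
  obtain ⟨β, hαβ, hβ⟩ := mem_S_of_lt hm hα
  have : {y | f y < β} ∈ nhds x := (tendsto_order.1 hc).2 β (by linarith)
  exact not_isMeagre_of_mem_nhds this hβ
end main

theorem stmt9 {X : Type*} [AddCommGroup X] [Module ℝ X] [TopologicalSpace X]
    [IsTopologicalAddGroup X] [ContinuousSMul ℝ X] [BaireSpace X]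
    (f g : X → ℝ) (hf : ∀ α : ℝ, Convex ℝ {x | f x < α})
    (hg : ∀ α : ℝ, Convex ℝ {x | g x < α})
    (hfg : IsMeagre {x | f x ≠ g x})
    (m : EReal) (hm : m = tessInf f Set.univ) (hm' : ⊥ < m)
    (x : X) (hx : ContinuousAt g x) :
    ¬ ContinuousAt f x ↔
      ((g x : EReal) = m ∧ (f x : EReal) ≤ m ∧
        ∃ α : ℝ, (α : EReal) < m ∧ x ∈ closure {y | f y < α}) := by
  have hmg : m ≤ (g x : EReal) := tessInf_le_gx hm hfg hx
  rcases hmg.lt_or_eq with hlt | heq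
  · -- m < g x : f continuous at x, RHS false
    have hcont : ContinuousAt f x :=
      continuousAt_of_no_closure hf hfg hx
        (fun γ hγ => not_mem_closure_of_lt hm hm' hf hfg hx hlt hγ)
    constructor
    · intro h; exact absurd hcont h
    · rintro ⟨h1, -, -⟩
      exact absurd (h1 ▸ hlt) (lt_irrefl _)
  · -- m = g x
    have hgm : (g x : EReal) = m := heq.symm
    have hfxm : (f x : EReal) ≤ m := by
      rw [← hgm]
      exact_mod_cast fx_le_gx hf hfg hx
    constructor
    · intro hncont
      refine ⟨hgm, hfxm, ?_⟩
      by_contra hno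
      push_neg at hno
      apply hncont
      apply continuousAt_of_no_closure hf hfg hx
      intro γ hγ
      have : (γ : EReal) < m := by
        rw [← hgm]
        exact_mod_cast hγ
      exact fun hcl => absurd hcl (hno γ this)
    · rintro ⟨-, -, α, hα, hcl⟩
      exact not_continuousAt_of_closure hm hα hcl
end

section
/- Let X be a Baire topological vector space and f : X → ℝ quasiconvex, and set m := T-ess inf_X f. Suppose (i) interior {f < α} ≠ ∅ for every α > m, and (ii) if m > −∞, then f⁻¹(m) ∩ closure({f < α}) is meagre for every α < m. Then the set of points of discontinuity of f is meagre. -/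
open Set Topology

open Filter

theorem aux_interior_closure {X : Type*} [AddCommGroup X] [Module ℝ X] [TopologicalSpace X]
    [IsTopologicalAddGroup X] [ContinuousSMul ℝ X] {s : Set X} (hs : Convex ℝ s)
    {y : X} (hy : y ∈ interior s) {x : X} (hx : x ∈ interior (closure s)) : x ∈ interior s := by
  have hcont : Continuous (fun t : ℝ => x + t • (x - y)) := by continuity
  have h0 : (fun t : ℝ => x + t • (x - y)) 0 = x := by simp
  have hnb : {t : ℝ | x + t • (x - y) ∈ interior (closure s)} ∈ 𝓝 (0 : ℝ) := by
    have := hcont.continuousAt (x := (0:ℝ)) (isOpen_interior.mem_nhds (h0 ▸ hx))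
    exact this
  obtain ⟨t, ht, htpos⟩ : ∃ t : ℝ, x + t • (x - y) ∈ interior (closure s) ∧ 0 < t := by
    have h1 : {t : ℝ | x + t • (x - y) ∈ interior (closure s)} ∈ 𝓝[>] (0:ℝ) :=
      nhdsWithin_le_nhds hnb
    rcases Filter.nonempty_of_mem (Filter.inter_mem h1 self_mem_nhdsWithin) with ⟨t, h1, h2⟩
    exact ⟨t, h1, h2⟩
  set z := x + t • (x - y) with hz
  have hzc : z ∈ closure s := interior_subset ht
  have h1t : (0:ℝ) < 1 + t := by linarith
  have hxz : x = z + (t / (1 + t)) • (y - z) := by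
    have hyz : y - z = -((1+t) • (x - y)) := by rw [hz]; module
    rw [hyz, smul_neg, smul_smul, div_mul_cancel₀ _ (ne_of_gt h1t), hz]
    module
  rw [hxz]
  exact hs.add_smul_sub_mem_interior' hzc hy
    ⟨div_pos htpos h1t, by rw [div_le_one h1t]; linarith⟩

theorem aux_frontier_meagre {X : Type*} [AddCommGroup X] [Module ℝ X] [TopologicalSpace X]
    [IsTopologicalAddGroup X] [ContinuousSMul ℝ X] {s : Set X} (hs : Convex ℝ s)
    (hne : (interior s).Nonempty) : IsMeagre (frontier s) := by
  obtain ⟨y, hy⟩ := hne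
  have hnwd : IsNowhereDense (frontier s) := by
    rw [isClosed_frontier.isNowhereDense_iff]
    rw [eq_empty_iff_forall_notMem]
    intro x hx
    have hxint : x ∈ interior s := by
      refine aux_interior_closure hs hy ?_
      exact interior_mono frontier_subset_closure hx
    exact (interior_subset hx).2 hxint
  rw [isMeagre_iff_countable_union_isNowhereDense]
  exact ⟨{frontier s}, by simpa using hnwd, countable_singleton _, by simp⟩

theorem aux_meagre_union {X : Type*} [TopologicalSpace X] {s t : Set X}
    (hs : IsMeagre s) (ht : IsMeagre t) : IsMeagre (s ∪ t) := by
  rw [IsMeagre, compl_union]; exact Filter.inter_mem hs ht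

theorem stmt12 {X : Type*} [AddCommGroup X] [Module ℝ X] [TopologicalSpace X]
    [IsTopologicalAddGroup X] [ContinuousSMul ℝ X] [BaireSpace X]
    (f : X → ℝ) (hf : ∀ α : ℝ, Convex ℝ {x | f x < α})
    (m : EReal) (hm : m = tessInf f Set.univ)
    (h1 : ∀ α : ℝ, m < (α : EReal) → (interior {x | f x < α}).Nonempty)
    (h2 : ∀ α : ℝ, (α : EReal) < m →
      IsMeagre ({x | (f x : EReal) = m} ∩ closure {x | f x < α})) :
    IsMeagre {x | ¬ ContinuousAt f x} := by
  -- sublevel sets below m are meagre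
  have key : ∀ β : ℝ, (β : EReal) < m → IsMeagre {x | f x < β} := by
    intro β hβ
    rw [hm, tessInf] at hβ
    obtain ⟨b, hbmem, hβb⟩ := lt_sSup_iff.mp hβ
    obtain ⟨α, hα, rfl⟩ := hbmem
    have hαm : IsMeagre {x | f x < α} := by simpa using hα
    simp only at hβb
    have hβα : β < α := by exact_mod_cast hβb
    refine hαm.mono fun x hx => ?_
    simp only [mem_setOf_eq] at hx ⊢
    linarith
  -- frontier of sublevel sets above m are meagre
  have frk : ∀ q : ℚ, m < ((q : ℝ) : EReal) → IsMeagre (frontier {x | f x < (q : ℝ)}) :=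
    fun q hq => aux_frontier_meagre (hf q) (h1 q hq)
  -- the global meagre bad set
  set g : ℚ → Set X := fun q =>
    {x | m < ((q : ℝ) : EReal) ∧ x ∈ frontier {y | f y < (q : ℝ)}} ∪
    {x | ((q : ℝ) : EReal) < m ∧
      (f x < (q : ℝ) ∨ ((f x : EReal) = m ∧ x ∈ closure {y | f y < (q : ℝ)}))} with hg
  have hgm : ∀ q : ℚ, IsMeagre (g q) := by
    intro q
    apply aux_meagre_union
    · by_cases h : m < ((q : ℝ) : EReal)
      · exact (frk q h).mono fun x hx => hx.2
      · have : {x | m < ((q : ℝ) : EReal) ∧ x ∈ frontier {y | f y < (q : ℝ)}} = ∅ := by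
          ext x; simp [h]
        rw [this]; exact IsMeagre.empty
    · by_cases h : ((q : ℝ) : EReal) < m
      · refine (aux_meagre_union (key q h) (h2 q h)).mono fun x hx => ?_
        rcases hx.2 with h' | h'
        · exact Or.inl h'
        · exact Or.inr h'
      · have : {x | ((q : ℝ) : EReal) < m ∧
            (f x < (q : ℝ) ∨ ((f x : EReal) = m ∧ x ∈ closure {y | f y < (q : ℝ)}))} = ∅ := by
          ext x; simp [h]
        rw [this]; exact IsMeagre.empty
  have hM : IsMeagre (⋃ q : ℚ, g q) := by
    obtain ⟨e, he⟩ := exists_surjective_nat ℚ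
    rw [← he.iUnion_comp g]
    exact isMeagre_iUnion fun n => hgm _
  refine hM.mono fun x hx => ?_
  simp only [mem_setOf_eq] at hx
  by_contra hxM
  apply hx
  -- facts from x ∉ ⋃ g q
  have hfr : ∀ q : ℚ, m < ((q : ℝ) : EReal) → x ∉ frontier {y | f y < (q : ℝ)} := by
    intro q hq hmem
    exact hxM (mem_iUnion.mpr ⟨q, Or.inl ⟨hq, hmem⟩⟩)
  have hlt : ∀ q : ℚ, ((q : ℝ) : EReal) < m → ¬ (f x < (q : ℝ)) := by
    intro q hq hmem
    exact hxM (mem_iUnion.mpr ⟨q, Or.inr ⟨hq, Or.inl hmem⟩⟩)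
  have hcl : ∀ q : ℚ, ((q : ℝ) : EReal) < m →
      ¬ ((f x : EReal) = m ∧ x ∈ closure {y | f y < (q : ℝ)}) := by
    intro q hq hmem
    exact hxM (mem_iUnion.mpr ⟨q, Or.inr ⟨hq, Or.inr hmem⟩⟩)
  -- f x ≥ m
  have hge : m ≤ ((f x : ℝ) : EReal) := by
    by_contra h
    push_neg at h
    obtain ⟨q, hq1, hq2⟩ := EReal.exists_rat_btwn_of_lt h
    exact hlt q hq2 (by exact_mod_cast hq1)
  -- prove continuity at x
  rw [ContinuousAt, Metric.tendsto_nhds]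
  intro ε hε
  -- upper semicontinuity
  obtain ⟨q, hq1, hq2⟩ := exists_rat_btwn (show f x < f x + ε by linarith)
  have hmq : m < ((q : ℝ) : EReal) := lt_of_le_of_lt hge (by exact_mod_cast hq1)
  have hxint : x ∈ interior {y | f y < (q : ℝ)} := by
    by_contra hint
    exact hfr q hmq ⟨subset_closure hq1, hint⟩
  have husc : ∀ᶠ y in 𝓝 x, f y < f x + ε := by
    refine Filter.eventually_of_mem (isOpen_interior.mem_nhds hxint) fun y hy => ?_
    have h3 : y ∈ {y | f y < (q : ℝ)} := interior_subset hy
    simp only [mem_setOf_eq] at h3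
    linarith
  -- lower semicontinuity
  have hlsc : ∀ᶠ y in 𝓝 x, f x - ε < f y := by
    have notcl : ∀ q : ℚ, x ∉ closure {y | f y < (q : ℝ)} → f x - ε < (q : ℝ) →
        ∀ᶠ y in 𝓝 x, f x - ε < f y := by
      intro q hnc hεq
      refine Filter.eventually_of_mem (isClosed_closure.isOpen_compl.mem_nhds hnc)
        (fun y hy => ?_)
      have h3 : ¬ (f y < (q : ℝ)) := fun h => hy (subset_closure h)
      push_neg at h3
      linarith
    rcases lt_or_eq_of_le hge with hlt' | heq
    · have hmax : max m (((f x - ε : ℝ)) : EReal) < ((f x : ℝ) : EReal) :=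
        max_lt hlt' (by exact_mod_cast (show f x - ε < f x by linarith))
      obtain ⟨q, hq1', hq2'⟩ := EReal.exists_rat_btwn_of_lt hmax
      have hmq' : m < ((q : ℝ) : EReal) := lt_of_le_of_lt (le_max_left _ _) hq1'
      have hqfx : (q : ℝ) < f x := by exact_mod_cast hq2'
      have hεq : f x - ε < (q : ℝ) := by
        exact_mod_cast lt_of_le_of_lt (le_max_right _ _) hq1'
      refine notcl q ?_ hεq
      intro hmem
      have hint : x ∈ interior {y | f y < (q : ℝ)} := by
        by_contra hint
        exact hfr q hmq' ⟨hmem, hint⟩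
      exact absurd (interior_subset hint) (not_lt.mpr hqfx.le)
    · obtain ⟨q, hq1', hq2'⟩ := exists_rat_btwn (show f x - ε < f x by linarith)
      have hqm : ((q : ℝ) : EReal) < m := by
        rw [heq]; exact_mod_cast hq2'
      refine notcl q (fun hmem => hcl q hqm ⟨heq.symm, hmem⟩) hq1'
  filter_upwards [husc, hlsc] with y hy1 hy2
  rw [Real.dist_eq, abs_sub_lt_iff]
  constructor <;> linarith
end
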